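/- The complement in X_S of the images of the two fixed points (0, 0, 0, ±1) of ι, with the subspace topology, is homeomorphic to ℝP² × ℝ. -/

import Mathlib

/-- The unit 3-sphere in `EuclideanSpace ℝ (Fin 4)`. -/
abbrev S3 : Type := ↥(Metric.sphere (0 : EuclideanSpace ℝ (Fin 4)) 1)

/-- The involution `ι(x₁, x₂, x₃, x₄) = (−x₁, −x₂, −x₃, x₄)` on the unit 3-sphere. -/
noncomputable def sphereInv (x : S3) : S3 :=
  ⟨(WithLp.toLp 2 (fun i => if i = 3 then (x : EuclideanSpace ℝ (Fin 4)) i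
      else -(x : EuclideanSpace ℝ (Fin 4)) i) : EuclideanSpace ℝ (Fin 4)), by
    have hx := x.2
    rw [mem_sphere_zero_iff_norm] at hx ⊢
    rw [EuclideanSpace.norm_eq] at hx ⊢
    simpa [apply_ite (‖·‖)] using hx⟩

/-- The quotient space `X_S = S³ / ι`, i.e. the quotient of the 3-sphere by the
equivalence relation identifying each point `p` with `ι p`, with the quotient topology. -/
abbrev XS : Type := Quot (fun p q : S3 => sphereInv p = q)

/-- The fixed point `(0, 0, 0, 1)` of `ι` on the 3-sphere. -/
noncomputable def northS3 : S3 :=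
  ⟨EuclideanSpace.single 3 (1 : ℝ), by simp⟩

/-- The fixed point `(0, 0, 0, −1)` of `ι` on the 3-sphere. -/
noncomputable def southS3 : S3 :=
  ⟨EuclideanSpace.single 3 (-1 : ℝ), by simp⟩

/-- The unit 2-sphere in `EuclideanSpace ℝ (Fin 3)`. -/
abbrev S2 : Type := ↥(Metric.sphere (0 : EuclideanSpace ℝ (Fin 3)) 1)

/-- The real projective plane: the quotient of the unit 2-sphere by the equivalence
relation identifying `x` with `−x`, with the quotient topology. -/
abbrev RP2 : Type :=
  Quot (fun x y : S2 => (y : EuclideanSpace ℝ (Fin 3)) = -(x : EuclideanSpace ℝ (Fin 3)))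

/-! Radial projection from the `x₄`-axis, `x ↦ (x' / ‖x'‖, x₄ / ‖x'‖)` with `x' = (x₁, x₂, x₃)`,
is a homeomorphism from `S³` minus the poles `(0, 0, 0, ±1)` onto the cylinder `S² × ℝ`, and it
conjugates `ι` to `(u, s) ↦ (-u, s)`. So `S² × ℝ` maps by a quotient map onto the complement of
the two singular points in `X_S`, with the same fibres as the quotient map `S² × ℝ → ℝP² × ℝ`
(a quotient map because `S² → ℝP²` is open), and the two targets are homeomorphic. -/

open Topology Metric EuclideanSpace

section InvolutionQuotient

variable {X : Type*} {σ : X → X} {r : X → X → Prop}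

theorem Quot.mk_eq_mk_iff_of_involutive (hσ : Function.Involutive σ)
    (hr : ∀ x y, r x y ↔ σ x = y) {a b : X} :
    Quot.mk r a = Quot.mk r b ↔ b = a ∨ b = σ a := by
  have hequiv : Equivalence fun a b : X => b = a ∨ b = σ a :=
    ⟨fun _ => .inl rfl,
      fun h => by rcases h with rfl | rfl <;> simp [hσ _],
      fun h₁ h₂ => by rcases h₁ with rfl | rfl <;> rcases h₂ with rfl | rfl <;> simp [hσ _]⟩
  refine Quot.eq.trans ⟨fun h => hequiv.eqvGen_iff.1 ?_, ?_⟩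
  · exact Relation.EqvGen.mono (fun x y hxy => .inr ((hr x y).1 hxy).symm) _ _ h
  · rintro (rfl | rfl)
    · exact .refl _
    · exact .rel _ _ ((hr _ _).2 rfl)

theorem Quot.mk_eq_mk_iff_of_involutive_of_fixed (hσ : Function.Involutive σ)
    (hr : ∀ x y, r x y ↔ σ x = y) {a b : X} (hb : σ b = b) :
    Quot.mk r a = Quot.mk r b ↔ a = b := by
  rw [Quot.mk_eq_mk_iff_of_involutive hσ hr, ← hσ.eq_iff, hb, or_self, eq_comm]

theorem isOpenQuotientMap_quot_mk_of_involutive [TopologicalSpace X]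
    (hσ : Function.Involutive σ) (hσc : Continuous σ) (hr : ∀ x y, r x y ↔ σ x = y) :
    IsOpenQuotientMap (Quot.mk r) := by
  refine ⟨Quot.mk_surjective, continuous_quot_mk, fun U hU => ?_⟩
  have hsat : Quot.mk r ⁻¹' (Quot.mk r '' U) = U ∪ σ ⁻¹' U := by
    ext x
    simp only [Set.mem_preimage, Set.mem_image, Quot.mk_eq_mk_iff_of_involutive hσ hr,
      Set.mem_union]
    constructor
    · rintro ⟨u, hu, rfl | rfl⟩
      exacts [.inl hu, .inr (by rwa [hσ u])]
    · rintro (hx | hx)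
      exacts [⟨x, hx, .inl rfl⟩, ⟨σ x, hx, .inr (hσ x).symm⟩]
  rw [← isQuotientMap_quot_mk.isOpen_preimage, hsat]
  exact hU.union (hU.preimage hσc)

end InvolutionQuotient

theorem Topology.IsQuotientMap.nonempty_homeomorph_of_fiber_iff {X Y Z : Type*}
    [TopologicalSpace X] [TopologicalSpace Y] [TopologicalSpace Z] {f : X → Y} {g : X → Z}
    (hf : IsQuotientMap f) (hg : IsQuotientMap g) (h : ∀ a b, f a = f b ↔ g a = g b) :
    Nonempty (Y ≃ₜ Z) := by
  have hker : Setoid.ker f = Setoid.ker g := Setoid.ext fun a b => by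
    simp only [Setoid.ker_def, h]
  have e : Quotient (Setoid.ker g) ≃ₜ Z := hg.homeomorph (f := ⟨g, hg.continuous⟩)
  rw [← hker] at e
  exact ⟨(hf.homeomorph (f := ⟨f, hf.continuous⟩)).symm.trans e⟩

lemma Real.sqrt_one_add_div_sq_eq_inv {a b : ℝ} (ha : 0 < a) (h : a ^ 2 + b ^ 2 = 1) :
    √(1 + (b / a) ^ 2) = a⁻¹ := by
  rw [Real.sqrt_eq_iff_mul_self_eq_of_pos (inv_pos.2 ha)]
  field_simp
  linarith

section Cylinder

variable {E : Type*} [NormedAddCommGroup E]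

lemma WithLp.mem_sphere_iff_norm_fst_sq_add_snd_sq {x : WithLp 2 (E × ℝ)} :
    x ∈ sphere 0 1 ↔ ‖x.fst‖ ^ 2 + x.snd ^ 2 = 1 := by
  rw [← sq_abs x.snd, ← Real.norm_eq_abs, ← WithLp.prod_norm_sq_eq_of_L2,
    mem_sphere_zero_iff_norm, pow_eq_one_iff_of_nonneg (norm_nonneg _) two_ne_zero]

lemma WithLp.fst_eq_zero_iff_of_mem_sphere {y : WithLp 2 (E × ℝ)} (hy : y ∈ sphere 0 1) :
    y.fst = 0 ↔ y = WithLp.toLp 2 (0, 1) ∨ y = WithLp.toLp 2 (0, -1) := by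
  obtain ⟨a, b⟩ := y
  have h : ‖a‖ ^ 2 + b ^ 2 = 1 := WithLp.mem_sphere_iff_norm_fst_sq_add_snd_sq.1 hy
  simp only [WithLp.toLp_fst, WithLp.toLp.injEq, Prod.mk.injEq, ← and_or_left, iff_self_and]
  rintro rfl
  simpa using h

variable [NormedSpace ℝ E]

noncomputable def radialProjectionCylinder :
    {x : sphere (0 : WithLp 2 (E × ℝ)) 1 // (x : WithLp 2 (E × ℝ)).fst ≠ 0} ≃ₜ
      sphere (0 : E) 1 × ℝ where
  toFun x := (⟨‖x.1.1.fst‖⁻¹ • x.1.1.fst, by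
      simp [norm_smul, inv_mul_cancel₀ (norm_ne_zero_iff.2 x.2)]⟩,
    x.1.1.snd / ‖x.1.1.fst‖)
  invFun p := ⟨⟨WithLp.toLp 2 ((√(1 + p.2 ^ 2))⁻¹ • (p.1 : E), (√(1 + p.2 ^ 2))⁻¹ * p.2), by
      rw [WithLp.mem_sphere_iff_norm_fst_sq_add_snd_sq]
      have h := Real.sq_sqrt (by positivity : (0 : ℝ) ≤ 1 + p.2 ^ 2)
      have hpos := Real.sqrt_pos.2 (by positivity : (0 : ℝ) < 1 + p.2 ^ 2)
      simp only [WithLp.toLp_fst, WithLp.toLp_snd, norm_smul, norm_eq_of_mem_sphere, mul_one,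
        norm_inv, Real.norm_eq_abs, abs_of_pos hpos]
      field_simp
      linarith⟩, by
    simpa using ⟨(Real.sqrt_pos.2 (by positivity)).ne', ne_zero_of_mem_unit_sphere p.1⟩⟩
  left_inv x := by
    obtain ⟨⟨x, hx⟩, hx₀⟩ := x
    have ha : 0 < ‖x.fst‖ := norm_pos_iff.2 hx₀
    have hsqrt := Real.sqrt_one_add_div_sq_eq_inv ha
      (WithLp.mem_sphere_iff_norm_fst_sq_add_snd_sq.1 hx)
    ext : 2
    simp only [hsqrt, inv_inv, smul_smul, mul_inv_cancel₀ ha.ne', one_smul,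
      mul_div_cancel₀ _ ha.ne']
    rfl
  right_inv p := by
    obtain ⟨u, s⟩ := p
    have hpos := Real.sqrt_pos.2 (by positivity : (0 : ℝ) < 1 + s ^ 2)
    have hnorm : ‖(√(1 + s ^ 2))⁻¹ • (u : E)‖ = (√(1 + s ^ 2))⁻¹ := by
      simp [norm_smul, hpos.le]
    ext : 1
    · ext
      simp [hnorm, smul_smul, hpos.ne']
    · simp only [hnorm, WithLp.toLp_fst, WithLp.toLp_snd]
      field_simp
  continuous_toFun := by
    have hne : ∀ x : {x : sphere (0 : WithLp 2 (E × ℝ)) 1 // (x : WithLp 2 (E × ℝ)).fst ≠ 0},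
        ‖x.1.1.fst‖ ≠ 0 := fun x => norm_ne_zero_iff.2 x.2
    fun_prop (disch := exact hne)
  continuous_invFun := by
    have hne : ∀ p : sphere (0 : E) 1 × ℝ, √(1 + p.2 ^ 2) ≠ 0 :=
      fun p => (Real.sqrt_pos.2 (by positivity)).ne'
    fun_prop (disch := exact hne)

lemma radialProjectionCylinder_symm_neg (p : sphere (0 : E) 1 × ℝ) :
    (radialProjectionCylinder.symm (-p.1, p.2)).1.1 =
      WithLp.toLp 2 (-(radialProjectionCylinder.symm p).1.1.fst,
        (radialProjectionCylinder.symm p).1.1.snd) := by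
  simp [radialProjectionCylinder]

end Cylinder

noncomputable def EuclideanSpace.initLastEquiv (n : ℕ) :
    EuclideanSpace ℝ (Fin (n + 1)) ≃ₗᵢ[ℝ] WithLp 2 (EuclideanSpace ℝ (Fin n) × ℝ) where
  toFun x := WithLp.toLp 2 (WithLp.toLp 2 (Fin.init x), x (Fin.last n))
  invFun p := WithLp.toLp 2 (Fin.snoc (α := fun _ => ℝ) p.fst p.snd)
  map_add' x y := rfl
  map_smul' c x := rfl
  left_inv x := by simp
  right_inv p := by
    simp only [Fin.init_snoc, Fin.snoc_last, WithLp.toLp_ofLp]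
    rfl
  norm_map' x := by
    rw [← sq_eq_sq₀ (norm_nonneg _) (norm_nonneg _), WithLp.prod_norm_sq_eq_of_L2,
      EuclideanSpace.norm_sq_eq, EuclideanSpace.norm_sq_eq, Fin.sum_univ_castSucc]
    rfl

@[simp]
lemma EuclideanSpace.initLastEquiv_apply_fst (n : ℕ) (x : EuclideanSpace ℝ (Fin (n + 1)))
    (i : Fin n) : (initLastEquiv n x).fst i = x i.castSucc := rfl

@[simp]
lemma EuclideanSpace.initLastEquiv_apply_snd (n : ℕ) (x : EuclideanSpace ℝ (Fin (n + 1))) :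
    (initLastEquiv n x).snd = x (Fin.last n) := rfl

lemma Fin.castSucc_ne_three (i : Fin 3) : i.castSucc ≠ 3 :=
  (Fin.castSucc_lt_last i).ne

lemma continuous_sphereInv : Continuous sphereInv := by
  refine .subtype_mk ((PiLp.continuous_toLp 2 _).comp (continuous_pi fun i => ?_)) _
  split_ifs <;> fun_prop

lemma sphereInv_involutive : Function.Involutive sphereInv := fun x => by
  ext i
  simp only [sphereInv]
  split_ifs <;> simp

lemma initLastEquiv_sphereInv (x : S3) :
    initLastEquiv 3 (sphereInv x) =
      WithLp.toLp 2 (-(initLastEquiv 3 x).fst, (initLastEquiv 3 x).snd) := by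
  refine (WithLp.ext_iff 2).2 (Prod.ext ?_ ?_)
  · ext i
    simp [sphereInv, Fin.castSucc_ne_three i]
  · rfl

lemma initLastEquiv_northS3 : initLastEquiv 3 northS3 = WithLp.toLp 2 (0, 1) := by
  refine (WithLp.ext_iff 2).2 (Prod.ext ?_ ?_)
  · ext i
    simp [northS3, Fin.castSucc_ne_three i]
  · rfl

lemma initLastEquiv_southS3 : initLastEquiv 3 southS3 = WithLp.toLp 2 (0, -1) := by
  refine (WithLp.ext_iff 2).2 (Prod.ext ?_ ?_)
  · ext i
    simp [southS3, Fin.castSucc_ne_three i]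
  · rfl

lemma sphereInv_northS3 : sphereInv northS3 = northS3 :=
  Subtype.ext <| (initLastEquiv 3).injective <| by
    rw [initLastEquiv_sphereInv, initLastEquiv_northS3]; simp

lemma sphereInv_southS3 : sphereInv southS3 = southS3 :=
  Subtype.ext <| (initLastEquiv 3).injective <| by
    rw [initLastEquiv_sphereInv, initLastEquiv_southS3]; simp

lemma initLastEquiv_fst_eq_zero_iff (x : S3) :
    (initLastEquiv 3 x).fst = 0 ↔ x = northS3 ∨ x = southS3 := by
  rw [WithLp.fst_eq_zero_iff_of_mem_sphere (by simp), ← initLastEquiv_northS3,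
    ← initLastEquiv_southS3]
  simp [Subtype.ext_iff]

noncomputable def s3MinusPolesHomeomorph : ↥({northS3, southS3}ᶜ : Set S3) ≃ₜ S2 × ℝ :=
  (((initLastEquiv 3).toHomeomorph.subtype fun x => by simp).subtype
      fun x => by simp [initLastEquiv_fst_eq_zero_iff]).trans
    radialProjectionCylinder

lemma initLastEquiv_s3MinusPolesHomeomorph_symm (p : S2 × ℝ) :
    initLastEquiv 3 (s3MinusPolesHomeomorph.symm p : S3) =
      (radialProjectionCylinder.symm p).1.1 := by
  simp [s3MinusPolesHomeomorph]

lemma sphereInv_s3MinusPolesHomeomorph_symm (p : S2 × ℝ) :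
    sphereInv (s3MinusPolesHomeomorph.symm p) = s3MinusPolesHomeomorph.symm (-p.1, p.2) :=
  Subtype.ext <| (initLastEquiv 3).injective <| by
    rw [initLastEquiv_sphereInv, initLastEquiv_s3MinusPolesHomeomorph_symm,
      initLastEquiv_s3MinusPolesHomeomorph_symm, radialProjectionCylinder_symm_neg]

lemma mk_s3MinusPolesHomeomorph_symm_eq_iff (a b : S2 × ℝ) :
    (Quot.mk _ (s3MinusPolesHomeomorph.symm a : S3) : XS) =
        Quot.mk _ (s3MinusPolesHomeomorph.symm b : S3) ↔
      b = a ∨ b = (-a.1, a.2) := by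
  rw [Quot.mk_eq_mk_iff_of_involutive sphereInv_involutive (fun _ _ => Iff.rfl),
    sphereInv_s3MinusPolesHomeomorph_symm]
  simp only [Subtype.coe_inj, EmbeddingLike.apply_eq_iff_eq]

lemma S2.neg_eq_iff (x y : S2) :
    (y : EuclideanSpace ℝ (Fin 3)) = -(x : EuclideanSpace ℝ (Fin 3)) ↔ -x = y := by
  rw [eq_comm, Subtype.ext_iff, coe_neg_sphere]

lemma prodMap_mk_id_eq_iff (a b : S2 × ℝ) :
    (Prod.map (Quot.mk _) id a : RP2 × ℝ) = Prod.map (Quot.mk _) id b ↔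
      b = a ∨ b = (-a.1, a.2) := by
  simp only [Prod.map, Quot.mk_eq_mk_iff_of_involutive neg_involutive S2.neg_eq_iff, id,
    Prod.ext_iff]
  tauto

/-- The complement in `X_S` of the images of the two fixed points `(0,0,0,±1)` of `ι`,
with the subspace topology, is homeomorphic to `ℝP² × ℝ`. -/
theorem XS_minus_singular_points_homeomorphic :
    Nonempty ((({Quot.mk _ northS3, Quot.mk _ southS3}ᶜ : Set XS)) ≃ₜ RP2 × ℝ) := by
  have hXS : IsOpenQuotientMap (Quot.mk _ : S3 → XS) := isOpenQuotientMap_quot_mk_of_involutive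
    sphereInv_involutive continuous_sphereInv fun _ _ => Iff.rfl
  have hRP2 : IsOpenQuotientMap (Quot.mk _ : S2 → RP2) :=
    isOpenQuotientMap_quot_mk_of_involutive neg_involutive continuous_neg S2.neg_eq_iff
  have hpre : {northS3, southS3}ᶜ =
      (Quot.mk _ : S3 → XS) ⁻¹' {Quot.mk _ northS3, Quot.mk _ southS3}ᶜ := by
    ext x
    simp [Quot.mk_eq_mk_iff_of_involutive_of_fixed sphereInv_involutive (fun _ _ => Iff.rfl),
      sphereInv_northS3, sphereInv_southS3]
  have hopen : IsOpen ({Quot.mk _ northS3, Quot.mk _ southS3}ᶜ : Set XS) := by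
    rw [← hXS.isQuotientMap.isOpen_preimage, ← hpre]
    exact (Set.toFinite _).isClosed.isOpen_compl
  refine ((hXS.isQuotientMap.restrictPreimage_isOpen hopen).comp
    (s3MinusPolesHomeomorph.symm.trans (Homeomorph.setCongr hpre)).isQuotientMap
    ).nonempty_homeomorph_of_fiber_iff (hRP2.prodMap .id).isQuotientMap fun a b => ?_
  rw [prodMap_mk_id_eq_iff, ← mk_s3MinusPolesHomeomorph_symm_eq_iff]
  exact Subtype.ext_iff
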